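/- arXiv:2504.17718 — 6 statements merged into one kernel-verified Lean document; each statement's English description precedes it below -/
import Mathlib

section
/- For a positive definite matrix W in R^{n×n} and radii r ≥ s ≥ 0, the Pontryagin difference of the ellipsoids E_W(r) = {x : xᵀW⁻¹x ≤ r²} and E_W(s) satisfies E_W(r) ⊖ E_W(s) = E_W(r − s). -/
open Matrix

/-- Ellipsoid of shape `W` and radius `r`. -/
def ell {n : ℕ} (W : Matrix (Fin n) (Fin n) ℝ) (r : ℝ) : Set (Fin n → ℝ) :=
  {x | x ⬝ᵥ W⁻¹ *ᵥ x ≤ r ^ 2}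

/-- Pontryagin set difference `A ⊖ B`. -/
def pontryaginDiff {n : ℕ} (A B : Set (Fin n → ℝ)) : Set (Fin n → ℝ) :=
  {a | ∀ b ∈ B, a + b ∈ A}

/-!
`E_W(r)` is the closed ball of radius `r` for the seminorm `x ↦ √(xᵀW⁻¹x)`, so it is enough
to compute the Pontryagin difference of two balls centred at `0` for a seminorm `p`. The triangle
inequality gives `B(r - s) + B(s) ⊆ B(r)`. Conversely, if `p a > 0`, translating `a` by the vector
`(s / p a) • a` of length `s` lengthens it by exactly `s`, which forces `p a ≤ r - s`.
-/

theorem Seminorm.forall_add_mem_closedBall_zero_iff {E : Type*} [AddCommGroup E] [Module ℝ E]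
    (p : Seminorm ℝ E) {r s : ℝ} (hs : 0 ≤ s) (hsr : s ≤ r) (a : E) :
    (∀ b ∈ p.closedBall 0 s, a + b ∈ p.closedBall 0 r) ↔ a ∈ p.closedBall 0 (r - s) := by
  simp only [mem_closedBall_zero]
  refine ⟨fun h => ?_, fun ha b hb => (map_add_le_add p a b).trans (by linarith)⟩
  rcases (apply_nonneg p a).eq_or_lt with ha | ha
  · linarith
  · have hc : 0 ≤ s / p a := by positivity
    have hb : p ((s / p a) • a) = s := by
      rw [map_smul_eq_mul, Real.norm_of_nonneg hc, div_mul_cancel₀ _ ha.ne']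
    have hab : p (a + (s / p a) • a) = p a + s := by
      have hsum : a + (s / p a) • a = (1 + s / p a) • a := by rw [add_smul, one_smul]
      rw [hsum, map_smul_eq_mul, Real.norm_of_nonneg (by positivity), add_mul, one_mul,
        div_mul_cancel₀ _ ha.ne']
    linarith [hab ▸ h _ hb.le]

noncomputable def Matrix.PosSemidef.seminorm {n : Type*} [Fintype n] {M : Matrix n n ℝ}
    (hM : M.PosSemidef) : Seminorm ℝ (n → ℝ) :=
  letI := M.toSeminormedAddCommGroup hM
  letI := M.toInnerProductSpace hM
  normSeminorm ℝ (n → ℝ)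

theorem Matrix.PosSemidef.seminorm_sq {n : Type*} [Fintype n] {M : Matrix n n ℝ}
    (hM : M.PosSemidef) (x : n → ℝ) : hM.seminorm x ^ 2 = x ⬝ᵥ M *ᵥ x :=
  letI := M.toSeminormedAddCommGroup hM
  letI := M.toInnerProductSpace hM
  (real_inner_self_eq_norm_sq x).symm.trans (dotProduct_comm _ _)

theorem ell_eq_closedBall {n : ℕ} {W : Matrix (Fin n) (Fin n) ℝ} (hW : W.PosDef) {r : ℝ}
    (hr : 0 ≤ r) : ell W r = hW.inv.posSemidef.seminorm.closedBall 0 r := by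
  ext x
  rw [ell, Set.mem_ofPred_eq, Seminorm.mem_closedBall_zero, ← hW.inv.posSemidef.seminorm_sq,
    sq_le_sq₀ (apply_nonneg _ x) hr]

theorem ell_pontryaginDiff {n : ℕ} (W : Matrix (Fin n) (Fin n) ℝ)
    (hW : W.PosDef) (r s : ℝ) (hs : 0 ≤ s) (hrs : s ≤ r) :
    pontryaginDiff (ell W r) (ell W s) = ell W (r - s) := by
  ext a
  rw [pontryaginDiff, Set.mem_ofPred_eq, ell_eq_closedBall hW (hs.trans hrs),
    ell_eq_closedBall hW hs, ell_eq_closedBall hW (sub_nonneg.2 hrs)]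
  exact Seminorm.forall_add_mem_closedBall_zero_iff _ hs hrs a
end

section
/- Let A_K be an n×n matrix, W ≻ 0 and λ ∈ (0,1) with A_K W A_Kᵀ ⪯ λ² W, and let Γ_w ⪯ (1−λ)² W. Define E_0 = 0 and E_{ℓ+1} = A_K E_ℓ A_Kᵀ + Γ_w. Then for every ℓ ∈ N, E_ℓ ⪯ (1 − λ^ℓ)² W. -/
/-!
Set `P ℓ = (1 - λ^ℓ)² W - E ℓ`. Since `1 - λ^(ℓ+1) = λ (1 - λ^ℓ) + (1 - λ)`, expanding the square
writes `P (ℓ+1)` as the sum of the congruence `A P ℓ Aᵀ`, the multiple `(1 - λ^ℓ)² (λ² W - A W Aᵀ)`,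
the gap `(1 - λ)² W - Γ`, and the cross term `2 λ (1 - λ) (1 - λ^ℓ) W`, all positive semidefinite.
-/

open Matrix

namespace Matrix.PosSemidef

variable {m : Type*} [Fintype m]

theorem mul_mul_transpose_same {n : Type*} [Fintype n] {P : Matrix n n ℝ} (hP : P.PosSemidef)
    (A : Matrix m n ℝ) : (A * P * Aᵀ).PosSemidef := by
  simpa using hP.mul_mul_conjTranspose_same A

theorem sq_smul_sub_mul_mul_transpose_add {A W E Γ : Matrix m m ℝ} {lam a b : ℝ}
    (hW : W.PosSemidef) (hlam : 0 ≤ lam) (ha : 0 ≤ a) (hb : 0 ≤ b)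
    (hAW : (lam ^ 2 • W - A * W * Aᵀ).PosSemidef) (hE : (a ^ 2 • W - E).PosSemidef)
    (hΓ : (b ^ 2 • W - Γ).PosSemidef) :
    ((lam * a + b) ^ 2 • W - (A * E * Aᵀ + Γ)).PosSemidef := by
  have split : (lam * a + b) ^ 2 • W - (A * E * Aᵀ + Γ)
      = A * (a ^ 2 • W - E) * Aᵀ + a ^ 2 • (lam ^ 2 • W - A * W * Aᵀ)
        + (b ^ 2 • W - Γ) + (2 * lam * a * b) • W := by
    simp only [Matrix.mul_sub, Matrix.sub_mul, Matrix.mul_smul, Matrix.smul_mul, smul_sub,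
      smul_smul]
    module
  rw [split]
  exact (((hE.mul_mul_transpose_same A).add (hAW.smul (sq_nonneg a))).add hΓ).add
    (hW.smul (by positivity))

end Matrix.PosSemidef

theorem covariance_recursion_bound_general {n : ℕ}
    (A_K W Γ_w : Matrix (Fin n) (Fin n) ℝ) (hW : W.PosDef)
    (lam : ℝ) (hlam0 : 0 < lam) (hlam1 : lam < 1)
    (hAW : (lam ^ 2 • W - A_K * W * A_Kᵀ).PosSemidef)
    (hΓW : ((1 - lam) ^ 2 • W - Γ_w).PosSemidef)
    (E : ℕ → Matrix (Fin n) (Fin n) ℝ)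
    (hE0 : E 0 = 0)
    (hErec : ∀ ℓ, E (ℓ + 1) = A_K * E ℓ * A_Kᵀ + Γ_w) :
    ∀ ℓ : ℕ, ((1 - lam ^ ℓ) ^ 2 • W - E ℓ).PosSemidef := by
  intro ℓ
  induction ℓ with
  | zero => simpa [hE0] using PosSemidef.zero
  | succ ℓ ih =>
    have hpow : 1 - lam ^ (ℓ + 1) = lam * (1 - lam ^ ℓ) + (1 - lam) := by ring
    rw [hErec, hpow]
    exact hW.posSemidef.sq_smul_sub_mul_mul_transpose_add hlam0.le
      (sub_nonneg.mpr (pow_le_one₀ hlam0.le hlam1.le)) (sub_nonneg.mpr hlam1.le) hAW ih hΓW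

theorem covariance_recursion_bound {n : ℕ}
    (A_K W Γ_w : Matrix (Fin n) (Fin n) ℝ) (hW : W.PosDef)
    (lam : ℝ) (hlam0 : 0 < lam) (hlam1 : lam < 1)
    (hΓ : Γ_w.PosSemidef)
    (hAW : (lam ^ 2 • W - A_K * W * A_Kᵀ).PosSemidef)
    (hΓW : ((1 - lam) ^ 2 • W - Γ_w).PosSemidef)
    (E : ℕ → Matrix (Fin n) (Fin n) ℝ)
    (hE0 : E 0 = 0)
    (hErec : ∀ ℓ, E (ℓ + 1) = A_K * E ℓ * A_Kᵀ + Γ_w) :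
    ∀ ℓ : ℕ, ((1 - lam ^ ℓ) ^ 2 • W - E ℓ).PosSemidef :=
  covariance_recursion_bound_general A_K W Γ_w hW lam hlam0 hlam1 hAW hΓW E hE0 hErec
end

section
/- Let W_x, W_u be positive definite, K a matrix with Kᵀ W_u⁻¹ K ⪯ W_x⁻¹, and let r_x, r_u ≥ 0 satisfy E_{W_x}(r_x) ⊆ X and E_{W_u}(r_u) ⊆ U for sets X ⊆ R^n, U ⊆ R^m. Set r_{xu} = min{r_x, r_u}. Then every x ∈ E_{W_x}(r_{xu}) satisfies x ∈ X and Kx ∈ U. -/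
/-! Since `Wx⁻¹ - Kᵀ Wu⁻¹ K ⪰ 0`, the `Wu⁻¹`-form at `K x`, which is the `Kᵀ Wu⁻¹ K`-form at `x`,
is bounded by the `Wx⁻¹`-form at `x`: `K` maps `E_{Wx}(r)` into `E_{Wu}(r)` for every `r`. -/

open Matrix

theorem dotProduct_mulVec_mulVec_eq_transpose_mul_mul {α m n : Type*} [CommSemiring α]
    [Fintype m] [Fintype n] (K : Matrix m n α) (A : Matrix m m α) (x : n → α) :
    K *ᵥ x ⬝ᵥ A *ᵥ (K *ᵥ x) = x ⬝ᵥ (Kᵀ * A * K) *ᵥ x := by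
  rw [← mulVec_mulVec, ← mulVec_mulVec, dotProduct_transpose_mulVec, dotProduct_comm]

theorem dotProduct_mulVec_le_of_posSemidef_sub {R n : Type*} [Ring R] [PartialOrder R]
    [IsOrderedRing R] [StarRing R] [TrivialStar R] [Fintype n] {A B : Matrix n n R}
    (h : (A - B).PosSemidef) (x : n → R) :
    x ⬝ᵥ B *ᵥ x ≤ x ⬝ᵥ A *ᵥ x := by
  simpa [sub_mulVec, dotProduct_sub, sub_nonneg] using h.dotProduct_mulVec_nonneg x

theorem ell_subset_ell {n : ℕ} (W : Matrix (Fin n) (Fin n) ℝ) {r s : ℝ} (hr : 0 ≤ r)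
    (hrs : r ≤ s) : ell W r ⊆ ell W s :=
  fun _ hx ↦ hx.trans (pow_le_pow_left₀ hr hrs 2)

theorem mulVec_mem_ell {n m : ℕ} {K : Matrix (Fin m) (Fin n) ℝ}
    {Wx : Matrix (Fin n) (Fin n) ℝ} {Wu : Matrix (Fin m) (Fin m) ℝ}
    (hKW : (Wx⁻¹ - Kᵀ * Wu⁻¹ * K).PosSemidef) {r : ℝ} {x : Fin n → ℝ} (hx : x ∈ ell Wx r) :
    K *ᵥ x ∈ ell Wu r := by
  change K *ᵥ x ⬝ᵥ Wu⁻¹ *ᵥ (K *ᵥ x) ≤ r ^ 2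
  rw [dotProduct_mulVec_mulVec_eq_transpose_mul_mul]
  exact (dotProduct_mulVec_le_of_posSemidef_sub hKW x).trans hx

theorem terminal_ellipsoid_in_XK_general {n m : ℕ}
    (K : Matrix (Fin m) (Fin n) ℝ)
    (Wx : Matrix (Fin n) (Fin n) ℝ) (Wu : Matrix (Fin m) (Fin m) ℝ)
    (hKW : (Wx⁻¹ - Kᵀ * Wu⁻¹ * K).PosSemidef)
    (X : Set (Fin n → ℝ)) (U : Set (Fin m → ℝ))
    (rx ru : ℝ) (hrx : 0 ≤ rx) (hru : 0 ≤ ru)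
    (hXincl : ell Wx rx ⊆ X) (hUincl : ell Wu ru ⊆ U) :
    ∀ x ∈ ell Wx (min rx ru), x ∈ X ∧ K *ᵥ x ∈ U := by
  intro x hx
  have hmin : 0 ≤ min rx ru := le_min hrx hru
  exact ⟨hXincl (ell_subset_ell Wx hmin (min_le_left _ _) hx),
    hUincl (ell_subset_ell Wu hmin (min_le_right _ _) (mulVec_mem_ell hKW hx))⟩

theorem terminal_ellipsoid_in_XK {n m : ℕ}
    (K : Matrix (Fin m) (Fin n) ℝ)
    (Wx : Matrix (Fin n) (Fin n) ℝ) (Wu : Matrix (Fin m) (Fin m) ℝ)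
    (hWx : Wx.PosDef) (hWu : Wu.PosDef)
    (hKW : (Wx⁻¹ - Kᵀ * Wu⁻¹ * K).PosSemidef)
    (X : Set (Fin n → ℝ)) (U : Set (Fin m → ℝ))
    (rx ru : ℝ) (hrx : 0 ≤ rx) (hru : 0 ≤ ru)
    (hXincl : ell Wx rx ⊆ X) (hUincl : ell Wu ru ⊆ U) :
    ∀ x ∈ ell Wx (min rx ru), x ∈ X ∧ K *ᵥ x ∈ U :=
  terminal_ellipsoid_in_XK_general K Wx Wu hKW X U rx ru hrx hru hXincl hUincl
end

section
/- Let λ ∈ (0,1), n ∈ N⁺, and ρ ≥ √(n(1−λ)/(1+λ)). Then for every γ ≥ 1, r ≥ ρ, and every ℓ ∈ N: (γ r − ρ(1 − λ^{ℓ+1}))² + n(1−λ)² λ^{2ℓ} ≤ (γ r − ρ(1 − λ^ℓ))². -/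
/-! Write `a = γ r - ρ (1 - λ^ℓ)` and `t = λ^ℓ`. The left-hand side is `(a - ρ t (1 - λ))² + n (1 - λ)² t²`,
so after cancelling `a²` and the factor `t (1 - λ) ≥ 0` it suffices that `(ρ² + n)(1 - λ) t ≤ 2 a ρ`.
Since `a ≥ ρ t` (because `γ r ≥ r ≥ ρ`), this follows from `(ρ² + n)(1 - λ) ≤ 2 ρ²`, which is exactly
the hypothesis `n (1 - λ) ≤ ρ² (1 + λ)` encoded by `ρ ≥ √(n (1 - λ)/(1 + λ))`. -/

lemma sq_sub_add_le_sq {a d e : ℝ} (h : d ^ 2 + e ≤ 2 * a * d) : (a - d) ^ 2 + e ≤ a ^ 2 := by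
  nlinarith

lemma add_mul_one_sub_le_two_mul_sq {ρ n lam : ℝ} (h : n * (1 - lam) ≤ ρ ^ 2 * (1 + lam)) :
    (ρ ^ 2 + n) * (1 - lam) ≤ 2 * ρ ^ 2 := by
  linarith

lemma sub_mul_one_sub_sq_add_le_sq {ρ n lam t a : ℝ} (hρ : 0 ≤ ρ) (ht : 0 ≤ t) (hlam : lam ≤ 1)
    (hn : n * (1 - lam) ≤ ρ ^ 2 * (1 + lam)) (ha : ρ * t ≤ a) :
    (a - ρ * t * (1 - lam)) ^ 2 + n * (1 - lam) ^ 2 * t ^ 2 ≤ a ^ 2 := by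
  apply sq_sub_add_le_sq
  have hfactor : 0 ≤ t * (1 - lam) := mul_nonneg ht (by linarith)
  have hcore : (ρ ^ 2 + n) * (1 - lam) * t ≤ 2 * a * ρ := by
    calc (ρ ^ 2 + n) * (1 - lam) * t ≤ 2 * ρ ^ 2 * t :=
          mul_le_mul_of_nonneg_right (add_mul_one_sub_le_two_mul_sq hn) ht
      _ = 2 * ρ * (ρ * t) := by ring
      _ ≤ 2 * ρ * a := by gcongr
      _ = 2 * a * ρ := by ring
  calc (ρ * t * (1 - lam)) ^ 2 + n * (1 - lam) ^ 2 * t ^ 2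
      = t * (1 - lam) * ((ρ ^ 2 + n) * (1 - lam) * t) := by ring
    _ ≤ t * (1 - lam) * (2 * a * ρ) := mul_le_mul_of_nonneg_left hcore hfactor
    _ = 2 * a * (ρ * t * (1 - lam)) := by ring

theorem key_scalar_inequality_general (lam : ℝ) (hlam0 : 0 < lam) (hlam1 : lam < 1)
    (n : ℕ) (ρ : ℝ)
    (hρ : Real.sqrt ((n : ℝ) * (1 - lam) / (1 + lam)) ≤ ρ) :
    ∀ (γ r : ℝ), 1 ≤ γ → ρ ≤ r → ∀ ℓ : ℕ,
      (γ * r - ρ * (1 - lam ^ (ℓ + 1))) ^ 2 + (n : ℝ) * (1 - lam) ^ 2 * lam ^ (2 * ℓ)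
        ≤ (γ * r - ρ * (1 - lam ^ ℓ)) ^ 2 := by
  intro γ r hγ hr ℓ
  obtain ⟨hρ0, hρsq⟩ := Real.sqrt_le_iff.mp hρ
  have hn : (n : ℝ) * (1 - lam) ≤ ρ ^ 2 * (1 + lam) := (div_le_iff₀ (by linarith)).mp hρsq
  have hr0 : 0 ≤ r := hρ0.trans hr
  have ha : ρ * lam ^ ℓ ≤ γ * r - ρ * (1 - lam ^ ℓ) := by
    linarith [le_mul_of_one_le_left hr0 hγ]
  have key := sub_mul_one_sub_sq_add_le_sq hρ0 (pow_nonneg hlam0.le ℓ) hlam1.le hn ha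
  convert key using 3 <;> ring

theorem key_scalar_inequality (lam : ℝ) (hlam0 : 0 < lam) (hlam1 : lam < 1)
    (n : ℕ) (hn : 0 < n) (ρ : ℝ)
    (hρ : Real.sqrt ((n : ℝ) * (1 - lam) / (1 + lam)) ≤ ρ) :
    ∀ (γ r : ℝ), 1 ≤ γ → ρ ≤ r → ∀ ℓ : ℕ,
      (γ * r - ρ * (1 - lam ^ (ℓ + 1))) ^ 2 + (n : ℝ) * (1 - lam) ^ 2 * lam ^ (2 * ℓ)
        ≤ (γ * r - ρ * (1 - lam ^ ℓ)) ^ 2 :=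
  key_scalar_inequality_general lam hlam0 hlam1 n ρ hρ
end

section
/- Let λ ∈ (0,1), n ∈ N⁺, N ∈ N⁺, ρ ≥ √(n(1−λ)/(1+λ)), γ ≥ 1 and r ≥ ρ. Then λ²(γ r − ρ(1 − λ^N))² + n(1−λ)² λ^{2N} ≤ (γ r − ρ(1 − λ^N))². -/
/-! Put `A = γ r - ρ (1 - λ^N)`. Since `γ r ≥ r ≥ ρ ≥ 0` we have `A ≥ ρ λ^N ≥ 0`, and
`ρ² ≥ n (1 - λ) / (1 + λ)`, so `(1 - λ²) A² ≥ (1 - λ)(1 + λ) ρ² λ^{2N} ≥ n (1 - λ)² λ^{2N}`. -/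

theorem sq_mul_sq_add_le_sq_of_mul_le {lam n ρ μ A : ℝ} (hlam₀ : -1 ≤ lam) (hlam₁ : lam ≤ 1)
    (hρ : n * (1 - lam) ≤ (1 + lam) * ρ ^ 2) (hρμ : 0 ≤ ρ * μ) (hA : ρ * μ ≤ A) :
    lam ^ 2 * A ^ 2 + n * (1 - lam) ^ 2 * μ ^ 2 ≤ A ^ 2 := by
  have hsq : (ρ * μ) ^ 2 ≤ A ^ 2 := pow_le_pow_left₀ hρμ hA 2
  have hpos : 0 ≤ (1 - lam) * (1 + lam) := mul_nonneg (by linarith) (by linarith)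
  calc lam ^ 2 * A ^ 2 + n * (1 - lam) ^ 2 * μ ^ 2
      = lam ^ 2 * A ^ 2 + (1 - lam) * μ ^ 2 * (n * (1 - lam)) := by ring
    _ ≤ lam ^ 2 * A ^ 2 + (1 - lam) * μ ^ 2 * ((1 + lam) * ρ ^ 2) := by gcongr
    _ = lam ^ 2 * A ^ 2 + (1 - lam) * (1 + lam) * (ρ * μ) ^ 2 := by ring
    _ ≤ lam ^ 2 * A ^ 2 + (1 - lam) * (1 + lam) * A ^ 2 := by gcongr
    _ = A ^ 2 := by ring

theorem mul_pow_le_mul_sub_mul_one_sub_pow {lam ρ γ r : ℝ} (N : ℕ) (hρ : 0 ≤ ρ) (hγ : 1 ≤ γ)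
    (hr : ρ ≤ r) : ρ * lam ^ N ≤ γ * r - ρ * (1 - lam ^ N) := by
  nlinarith

theorem terminal_scalar_inequality_general (lam : ℝ) (hlam0 : 0 < lam) (hlam1 : lam < 1)
    (n N : ℕ) (ρ γ r : ℝ)
    (hρ : Real.sqrt ((n : ℝ) * (1 - lam) / (1 + lam)) ≤ ρ)
    (hγ : 1 ≤ γ) (hr : ρ ≤ r) :
    lam ^ 2 * (γ * r - ρ * (1 - lam ^ N)) ^ 2 + (n : ℝ) * (1 - lam) ^ 2 * lam ^ (2 * N)
      ≤ (γ * r - ρ * (1 - lam ^ N)) ^ 2 := by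
  obtain ⟨hρ₀, hρsq⟩ := Real.sqrt_le_iff.mp hρ
  have hρsq' : (n : ℝ) * (1 - lam) ≤ (1 + lam) * ρ ^ 2 := by
    rwa [div_le_iff₀ (by linarith), mul_comm _ (1 + lam)] at hρsq
  rw [pow_mul']
  exact sq_mul_sq_add_le_sq_of_mul_le (by linarith) hlam1.le hρsq'
    (mul_nonneg hρ₀ (pow_nonneg hlam0.le N))
    (mul_pow_le_mul_sub_mul_one_sub_pow N hρ₀ hγ hr)

theorem terminal_scalar_inequality (lam : ℝ) (hlam0 : 0 < lam) (hlam1 : lam < 1)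
    (n N : ℕ) (hn : 0 < n) (hN : 0 < N) (ρ γ r : ℝ)
    (hρ : Real.sqrt ((n : ℝ) * (1 - lam) / (1 + lam)) ≤ ρ)
    (hγ : 1 ≤ γ) (hr : ρ ≤ r) :
    lam ^ 2 * (γ * r - ρ * (1 - lam ^ N)) ^ 2 + (n : ℝ) * (1 - lam) ^ 2 * lam ^ (2 * N)
      ≤ (γ * r - ρ * (1 - lam ^ N)) ^ 2 :=
  terminal_scalar_inequality_general lam hlam0 hlam1 n N ρ γ r hρ hγ hr
end

section
/- Let W ≻ 0, λ ∈ (0,1), and A_K, Γ_w with A_K W A_Kᵀ ⪯ λ² W and Γ_w ⪯ (1−λ)² W. Then for every ℓ ∈ N, tr(W^{-1/2} A_K^ℓ Γ_w (A_K^ℓ)ᵀ W^{-1/2}) ≤ n (1−λ)² λ^{2ℓ}. -/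
open Matrix

/-!
Conjugating the Loewner inequality `Γ ⪯ d W` by `A` and applying `A W Aᴴ ⪯ c W` gives, by
induction, `Aˡ Γ (Aˡ)ᴴ ⪯ d cˡ W`. Conjugating by `S = W^{-1/2}` and taking traces turns `W` into
the identity, whose trace is the dimension.
-/

namespace Matrix

variable {ι : Type*} [Fintype ι] [DecidableEq ι]

open scoped ComplexOrder

theorem posSemidef_smul_sub_pow_mul_mul_conjTranspose_pow {𝕜 : Type*} [RCLike 𝕜]
    {A W Γ : Matrix ι ι 𝕜} {c d : ℝ} (hc : 0 ≤ c) (hd : 0 ≤ d)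
    (hAW : (c • W - A * W * Aᴴ).PosSemidef) (hΓW : (d • W - Γ).PosSemidef) :
    ∀ ℓ : ℕ, ((d * c ^ ℓ) • W - A ^ ℓ * Γ * (A ^ ℓ)ᴴ).PosSemidef
  | 0 => by simpa using hΓW
  | k + 1 => by
    have hk := posSemidef_smul_sub_pow_mul_mul_conjTranspose_pow hc hd hAW hΓW k
    have hsplit : (d * c ^ (k + 1)) • W - A ^ (k + 1) * Γ * (A ^ (k + 1))ᴴ =
        A * ((d * c ^ k) • W - A ^ k * Γ * (A ^ k)ᴴ) * Aᴴ +
          (d * c ^ k) • (c • W - A * W * Aᴴ) := by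
      rw [pow_succ' A k, pow_succ c k, conjTranspose_mul, mul_sub, sub_mul, smul_sub, smul_smul,
        Matrix.mul_smul, Matrix.smul_mul]
      simp only [mul_assoc]
      abel
    rw [hsplit]
    exact (hk.mul_mul_conjTranspose_same A).add (hAW.smul (by positivity))

theorem trace_mul_mul_le_of_posSemidef_smul_sub {W M S : Matrix ι ι ℝ} {c : ℝ}
    (hW : IsUnit W) (hS : S.IsHermitian) (hSsq : S * S = W⁻¹) (h : (c • W - M).PosSemidef) :
    (S * M * S).trace ≤ c * Fintype.card ι := by
  have hSWS : (S * W * S).trace = Fintype.card ι := by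
    rw [trace_mul_cycle, hSsq, nonsing_inv_mul W ((isUnit_iff_isUnit_det W).mp hW), trace_one]
  have hconj : 0 ≤ (S * (c • W - M) * S).trace := by
    have := h.mul_mul_conjTranspose_same S
    rw [hS.eq] at this
    exact this.trace_nonneg
  rw [mul_sub, sub_mul, trace_sub, Matrix.mul_smul, Matrix.smul_mul, trace_smul, hSWS,
    smul_eq_mul] at hconj
  linarith

end Matrix

theorem trace_bound_iterate_general {n : ℕ}
    (A_K W Γ_w : Matrix (Fin n) (Fin n) ℝ) (hW : W.PosDef)
    (lam : ℝ)
    (hAW : (lam ^ 2 • W - A_K * W * A_Kᵀ).PosSemidef)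
    (hΓW : ((1 - lam) ^ 2 • W - Γ_w).PosSemidef)
    (S : Matrix (Fin n) (Fin n) ℝ) (hS : S.PosDef) (hSsq : S * S = W⁻¹) :
    ∀ ℓ : ℕ,
      (S * (A_K ^ ℓ) * Γ_w * (A_K ^ ℓ)ᵀ * S).trace ≤ (n : ℝ) * (1 - lam) ^ 2 * lam ^ (2 * ℓ) := by
  intro ℓ
  have hiter := posSemidef_smul_sub_pow_mul_mul_conjTranspose_pow (sq_nonneg lam)
    (sq_nonneg (1 - lam)) (by simpa only [conjTranspose_eq_transpose_of_trivial] using hAW) hΓW ℓ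
  have htrace := trace_mul_mul_le_of_posSemidef_smul_sub hW.isUnit hS.isHermitian hSsq hiter
  rw [conjTranspose_eq_transpose_of_trivial, ← pow_mul, Fintype.card_fin] at htrace
  simpa only [Matrix.mul_assoc, mul_comm, mul_left_comm] using htrace

theorem trace_bound_iterate {n : ℕ}
    (A_K W Γ_w : Matrix (Fin n) (Fin n) ℝ) (hW : W.PosDef)
    (lam : ℝ) (hlam0 : 0 < lam) (hlam1 : lam < 1)
    (hΓ : Γ_w.PosSemidef)
    (hAW : (lam ^ 2 • W - A_K * W * A_Kᵀ).PosSemidef)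
    (hΓW : ((1 - lam) ^ 2 • W - Γ_w).PosSemidef)
    (S : Matrix (Fin n) (Fin n) ℝ) (hS : S.PosDef) (hSsq : S * S = W⁻¹) :
    ∀ ℓ : ℕ,
      (S * (A_K ^ ℓ) * Γ_w * (A_K ^ ℓ)ᵀ * S).trace ≤ (n : ℝ) * (1 - lam) ^ 2 * lam ^ (2 * ℓ) :=
  trace_bound_iterate_general A_K W Γ_w hW lam hAW hΓW S hS hSsq
end
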